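/- arXiv:1108.5042 — 3 statements merged into one kernel-verified Lean document; each statement's English description precedes it below -/
import Mathlib

section
/- For all n ≥ 2, the sum over p from 1 to n-1 of (2(n-p)/(n(n-1)))·log(1 + (n-p-1)(n-p-2)/(n-1)) equals log n - 1 + o(1) as n → ∞; more precisely, it differs from log n - 1 by a function tending to 0. -/
/-!
Substituting `k = n - p` turns the sum into `(n(n-1))⁻¹ ∑_{k=1}^{n-1} 2k log(1 + (k-1)(k-2)/c)`
with `c = n - 1`. Each term lies between `g(k-2)` and `g(k)` for the increasing function
`g(x) = 2x log(1 + x²/c)`, whose primitive is `F(x) = (c + x²) log(1 + x²/c) - x²`, so the sum is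
squeezed between `F(n-3)` and `F(n)`, divided by `n(n-1)`. For fixed `t` and `x = n + t`, put
`R = (c + x²)/(nc) = 1 + O(1/n)`; then `1 + x²/c = nR` and
`F(x)/(nc) - (log n - 1) = R log R + (R - 1) log n - (R - 1) + 1/n → 0`.
-/

open Filter Topology Finset Real

theorem MonotoneOn.sum_Ico_one_le_integral {f : ℝ → ℝ} {a : ℕ → ℝ} (hf : MonotoneOn f (Set.Ici 0))
    (hf0 : 0 ≤ f 0) (haf : ∀ k : ℕ, a k ≤ f k) (n : ℕ) :
    ∑ k ∈ Ico 1 n, a k ≤ ∫ x in (0 : ℝ)..n, f x := by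
  have hfk (k : ℕ) : 0 ≤ f k :=
    hf0.trans (hf Set.self_mem_Ici (Set.mem_Ici.2 k.cast_nonneg) k.cast_nonneg)
  calc ∑ k ∈ Ico 1 n, a k ≤ ∑ k ∈ Ico 1 n, f k := sum_le_sum fun k _ => haf k
    _ ≤ ∑ k ∈ Ico 0 n, f k :=
      sum_le_sum_of_subset_of_nonneg (Ico_subset_Ico_left zero_le_one) fun k _ _ => hfk k
    _ ≤ ∫ x in ((0 : ℕ) : ℝ)..n, f x :=
      hf.mono (Set.Icc_subset_Ici_self.trans (by simp)) |>.sum_le_integral_Ico n.zero_le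
    _ = ∫ x in (0 : ℝ)..n, f x := by rw [Nat.cast_zero]

theorem MonotoneOn.integral_le_sum_Ico_one {f : ℝ → ℝ} {a : ℕ → ℝ} {m : ℕ} (hm : 1 ≤ m)
    (hf : MonotoneOn f (Set.Ici 0)) (ha : ∀ k, 0 ≤ a k) (hfa : ∀ k : ℕ, f (k + 1) ≤ a (k + m))
    (n : ℕ) : ∫ x in (0 : ℝ)..(n - m : ℕ), f x ≤ ∑ k ∈ Ico 1 n, a k := by
  calc ∫ x in (0 : ℝ)..(n - m : ℕ), f x = ∫ x in (0 : ℝ)..0 + (n - m : ℕ), f x := by rw [zero_add]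
    _ ≤ ∑ k ∈ range (n - m), f (0 + ↑(k + 1)) :=
      hf.mono (Set.Icc_subset_Ici_self) |>.integral_le_sum
    _ ≤ ∑ k ∈ range (n - m), a (m + k) :=
      sum_le_sum fun k _ => by simpa [add_comm m] using hfa k
    _ = ∑ k ∈ Ico m n, a k := (sum_Ico_eq_sum_range a m n).symm
    _ ≤ ∑ k ∈ Ico 1 n, a k :=
      sum_le_sum_of_subset_of_nonneg (Ico_subset_Ico_left hm) fun k _ _ => ha k

noncomputable def logKernel (c x : ℝ) : ℝ := 2 * x * log (1 + x ^ 2 / c)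

noncomputable def logKernelPrimitive (c x : ℝ) : ℝ := (c + x ^ 2) * log (1 + x ^ 2 / c) - x ^ 2

noncomputable def logKernelTerm (c : ℝ) (k : ℕ) : ℝ := 2 * k * log (1 + ((k - 1) * (k - 2) : ℕ) / c)

section

variable {c : ℝ}

theorem one_add_sq_div_pos (hc : 0 ≤ c) (x : ℝ) : 0 < 1 + x ^ 2 / c := by positivity

theorem log_one_add_sq_div_nonneg (hc : 0 ≤ c) (x : ℝ) : 0 ≤ log (1 + x ^ 2 / c) :=
  log_nonneg (le_add_of_nonneg_right (by positivity))

theorem hasDerivAt_logKernelPrimitive (hc : 0 < c) (x : ℝ) :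
    HasDerivAt (logKernelPrimitive c) (logKernel c x) x := by
  have hpos := one_add_sq_div_pos hc.le x
  have hsq : HasDerivAt (fun x : ℝ => x ^ 2) (2 * x) x := by simpa using hasDerivAt_pow 2 x
  have hlog : HasDerivAt (fun x : ℝ => log (1 + x ^ 2 / c)) (2 * x / c / (1 + x ^ 2 / c)) x :=
    ((hsq.div_const c).const_add 1).log hpos.ne'
  refine (((hsq.const_add c).mul hlog).sub hsq).congr_deriv ?_
  unfold logKernel
  field_simp
  ring

theorem continuous_logKernel (hc : 0 ≤ c) : Continuous (logKernel c) :=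
  (continuous_const.mul continuous_id).mul <|
    (by fun_prop : Continuous fun x : ℝ => 1 + x ^ 2 / c).log fun x => (one_add_sq_div_pos hc x).ne'

theorem integral_logKernel (hc : 0 < c) (a b : ℝ) :
    ∫ x in a..b, logKernel c x = logKernelPrimitive c b - logKernelPrimitive c a :=
  intervalIntegral.integral_eq_sub_of_hasDerivAt (fun x _ => hasDerivAt_logKernelPrimitive hc x)
    ((continuous_logKernel hc.le).intervalIntegrable a b)

theorem logKernelPrimitive_zero : logKernelPrimitive c 0 = 0 := by simp [logKernelPrimitive]

theorem logKernel_zero : logKernel c 0 = 0 := by simp [logKernel]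

theorem monotoneOn_logKernel (hc : 0 ≤ c) : MonotoneOn (logKernel c) (Set.Ici 0) := by
  intro x hx y _ hxy
  have hlog : log (1 + x ^ 2 / c) ≤ log (1 + y ^ 2 / c) := by
    have hpos := one_add_sq_div_pos hc x
    gcongr
  unfold logKernel
  gcongr
  · exact log_one_add_sq_div_nonneg hc x
  · exact mul_nonneg zero_le_two (hx.trans hxy)

theorem logKernelTerm_nonneg (hc : 0 ≤ c) (k : ℕ) : 0 ≤ logKernelTerm c k :=
  mul_nonneg (by positivity) (log_nonneg (le_add_of_nonneg_right (by positivity)))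

theorem logKernelTerm_le_logKernel (hc : 0 ≤ c) (k : ℕ) : logKernelTerm c k ≤ logKernel c k := by
  have hk : (((k - 1) * (k - 2) : ℕ) : ℝ) ≤ (k : ℝ) ^ 2 := by
    rw [sq]; exact_mod_cast Nat.mul_le_mul (k.sub_le 1) (k.sub_le 2)
  unfold logKernelTerm logKernel
  gcongr

theorem logKernel_succ_le_logKernelTerm (hc : 0 ≤ c) (k : ℕ) :
    logKernel c (k + 1) ≤ logKernelTerm c (k + 3) := by
  have hpos := one_add_sq_div_pos hc ((k : ℝ) + 1)
  unfold logKernelTerm logKernel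
  push_cast
  gcongr
  · exact log_nonneg (le_add_of_nonneg_right (by positivity))
  · linarith
  · nlinarith

theorem logKernelPrimitive_sub_three_le_sum_logKernelTerm (hc : 0 < c) (n : ℕ) :
    logKernelPrimitive c (n - 3 : ℕ) ≤ ∑ k ∈ Ico 1 n, logKernelTerm c k := by
  simpa [integral_logKernel hc, logKernelPrimitive_zero] using
    (monotoneOn_logKernel hc.le).integral_le_sum_Ico_one (by norm_num : 1 ≤ 3)
      (logKernelTerm_nonneg hc.le) (logKernel_succ_le_logKernelTerm hc.le) n

theorem sum_logKernelTerm_le_logKernelPrimitive (hc : 0 < c) (n : ℕ) :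
    ∑ k ∈ Ico 1 n, logKernelTerm c k ≤ logKernelPrimitive c n := by
  simpa [integral_logKernel hc, logKernelPrimitive_zero] using
    (monotoneOn_logKernel hc.le).sum_Ico_one_le_integral logKernel_zero.ge
      (logKernelTerm_le_logKernel hc.le) n

end

theorem sum_Icc_eq_sum_logKernelTerm (n : ℕ) :
    ∑ p ∈ Icc 1 (n - 1), (2 * ((n - p : ℕ) : ℝ) / ((n : ℝ) * ((n : ℝ) - 1))) *
        log (1 + (((n - p - 1) * (n - p - 2) : ℕ) : ℝ) / ((n : ℝ) - 1))
      = (∑ k ∈ Ico 1 n, logKernelTerm (n - 1) k) / (n * (n - 1)) := by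
  rw [sum_div]
  refine sum_nbij' (fun p => n - p) (fun k => n - k) ?_ ?_ ?_ ?_ fun p _ => ?_
  iterate 4 (intro p hp; simp only [mem_Icc, mem_Ico] at hp ⊢; omega)
  unfold logKernelTerm
  ring

theorem tendsto_ratio_sub_one_mul_log_pow (t : ℝ) (k : ℕ) :
    Tendsto (fun n : ℕ => (((n - 1) + (n + t) ^ 2) / (n * (n - 1)) - 1) * log n ^ k) atTop
      (𝓝 0) := by
  have hcoef : Tendsto (fun n : ℕ => 2 * (1 + t) + (t ^ 2 - 1) * (1 / (n : ℝ))) atTop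
      (𝓝 (2 * (1 + t))) := by
    simpa using ((tendsto_one_div_atTop_nhds_zero_nat (𝕜 := ℝ)).const_mul (t ^ 2 - 1)).const_add
      (2 * (1 + t))
  have hlog : Tendsto (fun n : ℕ => log n ^ k / (n - 1)) atTop (𝓝 0) := by
    simpa [← sub_eq_add_neg, Function.comp_def] using
      (tendsto_pow_log_div_mul_add_atTop 1 (-1) k one_ne_zero).comp tendsto_natCast_atTop_atTop
  refine (mul_zero (2 * (1 + t)) ▸ hcoef.mul hlog).congr' ?_
  filter_upwards [eventually_ge_atTop 2] with n hn
  have hc : (n : ℝ) - 1 ≠ 0 := (sub_pos.2 (Nat.one_lt_cast.2 hn)).ne'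
  field_simp
  ring

theorem tendsto_logKernelPrimitive_div_sub_log (t : ℝ) :
    Tendsto (fun n : ℕ => logKernelPrimitive (n - 1) (n + t) / (n * (n - 1)) - (log n - 1))
      atTop (𝓝 0) := by
  set R : ℕ → ℝ := fun n => ((n - 1) + (n + t) ^ 2) / (n * (n - 1)) with hR
  have hR1 : Tendsto (fun n => R n - 1) atTop (𝓝 0) := by
    simpa using tendsto_ratio_sub_one_mul_log_pow t 0
  have hRlogR : Tendsto (fun n => R n * log (R n)) atTop (𝓝 0) := by
    have hRlim : Tendsto R atTop (𝓝 1) := by simpa using hR1.add_const 1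
    simpa [Function.comp_def] using (continuous_mul_log.tendsto 1).comp hRlim
  have hlim := ((hRlogR.add (tendsto_ratio_sub_one_mul_log_pow t 1)).sub hR1).add
    tendsto_one_div_atTop_nhds_zero_nat
  simp only [add_zero, sub_zero, pow_one] at hlim
  refine hlim.congr' ?_
  filter_upwards [eventually_ge_atTop 2] with n hn
  have hc : (0 : ℝ) < n - 1 := sub_pos.2 (Nat.one_lt_cast.2 hn)
  have harg : 1 + (n + t) ^ 2 / (n - 1) = n * R n := by
    rw [hR]; field_simp
  rw [logKernelPrimitive, harg, log_mul (by positivity) (by positivity), hR]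
  field_simp
  ring

/-- `∑_{p=1}^{n-1} (2(n-p)/(n(n-1)))·log(1 + (n-p-1)(n-p-2)/(n-1)) = log n - 1 + o(1)`:
the difference with `log n - 1` tends to `0` as `n → ∞`. Natural subtraction makes
`(n-p-1)(n-p-2) = 0` when `p = n-1` or `p = n-2`. -/
theorem stmt8 :
    Tendsto (fun n : ℕ =>
      (∑ p ∈ Finset.Icc 1 (n - 1),
        (2 * ((n - p : ℕ) : ℝ) / ((n : ℝ) * ((n : ℝ) - 1))) *
          Real.log (1 + (((n - p - 1) * (n - p - 2) : ℕ) : ℝ) / ((n : ℝ) - 1)))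
        - (Real.log n - 1)) atTop (nhds 0) := by
  have hlow : Tendsto (fun n : ℕ =>
      logKernelPrimitive (n - 1) (n - 3 : ℕ) / (n * (n - 1)) - (log n - 1)) atTop (𝓝 0) := by
    refine (tendsto_logKernelPrimitive_div_sub_log (-3)).congr' ?_
    filter_upwards [eventually_ge_atTop 3] with n hn
    rw [Nat.cast_sub hn, Nat.cast_ofNat, ← sub_eq_add_neg]
  have hup : Tendsto (fun n : ℕ =>
      logKernelPrimitive (n - 1) n / (n * (n - 1)) - (log n - 1)) atTop (𝓝 0) := by
    simpa using tendsto_logKernelPrimitive_div_sub_log 0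
  have hc : ∀ᶠ n : ℕ in atTop, (0 : ℝ) < n - 1 := by
    filter_upwards [eventually_ge_atTop 2] with n hn
    exact sub_pos.2 (Nat.one_lt_cast.2 hn)
  refine tendsto_of_tendsto_of_tendsto_of_le_of_le' hlow hup ?_ ?_ <;>
    filter_upwards [hc] with n hc <;> rw [sum_Icc_eq_sum_logKernelTerm] <;> gcongr
  · exact logKernelPrimitive_sub_three_le_sum_logKernelTerm hc n
  · exact sum_logKernelTerm_le_logKernelPrimitive hc n
end

section
/- For every integer n ≥ 1, the sum ∑_{r=1}^{n-1} r·log(r²/n) is at most ∫_0^n u·log(u²/n) du + 2√n/e. -/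
/-!
On `[0, ∞)` the function `f u = u log (u² / n) = 2 u log u - u log n` is convex, so each summand
`f r` is at most `∫_{r-1/2}^{r+1/2} f` (left Hermite–Hadamard inequality), and the sum is bounded
by the integral over `[1/2, n - 1/2]`. The two omitted end pieces have length `1/2` and
`f ≥ -2√n/e` (from `v log v ≥ -1/e` with `u = √n v`), so they cost at most `2√n/e` together.
-/

open Real Set intervalIntegral

theorem ConvexOn.sub_mul_map_midpoint_le_intervalIntegral {f : ℝ → ℝ} {a b : ℝ} (hab : a ≤ b)
    (hf : ConvexOn ℝ (Icc a b) f) (hint : IntervalIntegrable f MeasureTheory.volume a b) :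
    (b - a) * f ((a + b) / 2) ≤ ∫ x in a..b, f x := by
  have hreflect : ∫ x in a..b, f (a + b - x) = ∫ x in a..b, f x := by
    simp [integral_comp_sub_left]
  -- pair `x` with its reflection `a + b - x`, whose midpoint is `(a + b) / 2`
  have hpair : ∀ x ∈ Icc a b, 2 * f ((a + b) / 2) ≤ f x + f (a + b - x) := by
    intro x hx
    have hx' : a + b - x ∈ Icc a b := ⟨by linarith [hx.2], by linarith [hx.1]⟩
    have h := hf.2 hx hx' (by norm_num : (0:ℝ) ≤ 1 / 2) (by norm_num : (0:ℝ) ≤ 1 / 2) (by norm_num)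
    simp only [smul_eq_mul] at h
    rw [show 1 / 2 * x + 1 / 2 * (a + b - x) = (a + b) / 2 by ring] at h
    linarith
  have hint' : IntervalIntegrable (fun x => f (a + b - x)) MeasureTheory.volume a b := by
    simpa using hint.symm.comp_sub_left (a + b)
  have := integral_mono_on hab intervalIntegrable_const (hint.add hint') hpair
  rw [integral_const, integral_add hint hint', hreflect, smul_eq_mul] at this
  linarith

theorem ConvexOn.sum_Icc_le_intervalIntegral {f : ℝ → ℝ} (hf : ConvexOn ℝ (Ici (1 / 2)) f)
    (hc : ContinuousOn f (Ici (1 / 2))) (m : ℕ) :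
    ∑ r ∈ Finset.Icc 1 m, f r ≤ ∫ x in (1 / 2 : ℝ)..m + 1 / 2, f x := by
  have hint : ∀ a b : ℝ, 1 / 2 ≤ a → 1 / 2 ≤ b → IntervalIntegrable f MeasureTheory.volume a b :=
    fun a b ha hb => (hc.mono fun x hx => le_trans (le_min ha hb) hx.1).intervalIntegrable
  induction m with
  | zero => simp
  | succ m ih =>
    have hm : (1 / 2 : ℝ) ≤ m + 1 / 2 := by linarith [m.cast_nonneg (α := ℝ)]
    have hstep := (hf.subset (Icc_subset_Ici_iff (by linarith) |>.2 hm) (convex_Icc _ _)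
      ).sub_mul_map_midpoint_le_intervalIntegral (a := m + 1 / 2) (b := m + 1 + 1 / 2)
        (by linarith) (hint _ _ hm (by linarith))
    rw [Finset.sum_Icc_succ_top (by omega), ← integral_add_adjacent_intervals
      (hint _ _ le_rfl hm) (hint _ _ hm (by linarith))]
    push_cast
    rw [show (m + 1 + 1 / 2 - (m + 1 / 2) : ℝ) = 1 by ring,
      show ((m + 1 / 2 + (m + 1 + 1 / 2)) / 2 : ℝ) = m + 1 by ring, one_mul] at hstep
    exact add_le_add ih hstep

theorem sub_mul_le_intervalIntegral_of_le {f : ℝ → ℝ} {a b C : ℝ} (hab : a ≤ b)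
    (hint : IntervalIntegrable f MeasureTheory.volume a b) (hC : ∀ x ∈ Icc a b, C ≤ f x) :
    (b - a) * C ≤ ∫ x in a..b, f x := by
  simpa using integral_mono_on hab intervalIntegrable_const hint hC

theorem neg_inv_exp_le_mul_log {x : ℝ} (hx : 0 ≤ x) : -(exp 1)⁻¹ ≤ x * log x := by
  rcases hx.eq_or_lt with rfl | hx
  · simp [(exp_pos 1).le]
  have h := self_sub_one_le_mul_log (mul_pos (exp_pos 1) hx).le
  rw [log_mul (exp_pos 1).ne' hx.ne', log_exp] at h
  rw [show -(exp 1)⁻¹ = -1 / exp 1 by ring, div_le_iff₀' (exp_pos 1)]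
  linarith

theorem mul_log_sq_div_eq {n : ℝ} (hn : n ≠ 0) (u : ℝ) :
    u * log (u ^ 2 / n) = 2 * (u * log u) - log n * u := by
  rcases eq_or_ne u 0 with rfl | hu
  · simp
  rw [log_div (pow_ne_zero 2 hu) hn, log_pow]
  push_cast
  ring

theorem convexOn_mul_log_sq_div {n : ℝ} (hn : n ≠ 0) :
    ConvexOn ℝ (Ici 0) fun u => u * log (u ^ 2 / n) := by
  simp_rw [mul_log_sq_div_eq hn]
  exact (convexOn_mul_log.smul zero_le_two).sub
    ((LinearMap.mul ℝ ℝ (log n)).concaveOn (convex_Ici 0))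

theorem continuous_mul_log_sq_div {n : ℝ} (hn : n ≠ 0) :
    Continuous fun u => u * log (u ^ 2 / n) := by
  simp_rw [mul_log_sq_div_eq hn]
  fun_prop

theorem neg_two_sqrt_div_exp_le_mul_log_sq_div {n u : ℝ} (hn : 0 < n) (hu : 0 ≤ u) :
    -(2 * √n / exp 1) ≤ u * log (u ^ 2 / n) := by
  have hs : 0 < √n := sqrt_pos.2 hn
  set v := u / √n
  have huv : u = √n * v := (mul_div_cancel₀ u hs.ne').symm
  have : u * log (u ^ 2 / n) = 2 * √n * (v * log v) := by
    rw [huv, mul_pow, sq_sqrt hn.le, mul_div_cancel_left₀ _ hn.ne', log_pow]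
    push_cast; ring
  calc -(2 * √n / exp 1) = 2 * √n * -(exp 1)⁻¹ := by ring
    _ ≤ 2 * √n * (v * log v) := by gcongr; exact neg_inv_exp_le_mul_log (by positivity)
    _ = u * log (u ^ 2 / n) := this.symm

/-- For every integer `n ≥ 1`,
`∑_{r=1}^{n-1} r·log(r²/n) ≤ ∫_0^n u·log(u²/n) du + 2√n/e`. -/
theorem stmt9 (n : ℕ) (hn : 1 ≤ n) :
    ∑ r ∈ Finset.Icc 1 (n - 1), (r : ℝ) * Real.log ((r : ℝ) ^ 2 / n)
      ≤ (∫ u in (0:ℝ)..(n : ℝ), u * Real.log (u ^ 2 / n))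
        + 2 * Real.sqrt n / Real.exp 1 := by
  have hn0 : (0 : ℝ) < n := by exact_mod_cast hn
  set f : ℝ → ℝ := fun u => u * log (u ^ 2 / n)
  have hint : ∀ a b, IntervalIntegrable f MeasureTheory.volume a b :=
    (continuous_mul_log_sq_div hn0.ne').intervalIntegrable
  have hmid : ((n - 1 : ℕ) : ℝ) + 1 / 2 = n - 1 / 2 := by
    rw [Nat.cast_sub hn]; push_cast; ring
  have hsum := ((convexOn_mul_log_sq_div hn0.ne').subset (Ici_subset_Ici.2 (by norm_num))
    (convex_Ici _)).sum_Icc_le_intervalIntegral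
    ((continuous_mul_log_sq_div hn0.ne').continuousOn) (n - 1)
  rw [hmid] at hsum
  have hleft := sub_mul_le_intervalIntegral_of_le (by norm_num) (hint 0 (1 / 2))
    fun x hx => neg_two_sqrt_div_exp_le_mul_log_sq_div hn0 hx.1
  have hright := sub_mul_le_intervalIntegral_of_le (by linarith) (hint (n - 1 / 2) n)
    fun x hx => neg_two_sqrt_div_exp_le_mul_log_sq_div hn0 (by linarith [hx.1])
  rw [← integral_add_adjacent_intervals (hint 0 (1 / 2)) (hint (1 / 2) n),
    ← integral_add_adjacent_intervals (hint (1 / 2) (n - 1 / 2)) (hint (n - 1 / 2) n)]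
  linarith
end

section
/- The sequence a_n := (1/n²)·log F(n) - (1/2)(log n - 2) tends to a limit ≤ 0 (equivalently, F(n) ≤ ((1+o(1))·n/e²)^{n²/2}), where F(n) = ∏_{d=1}^{n-1} (d!)^{n/(2d)} is replaced by this upper bound. -/
/-!
Taking logarithms, `log G(n) = (n/2) ∑_{d<n} log(d!)/d`. Monotonicity of the Stirling sequence
gives `log d! ≤ d log d - d + √d`, so `log(d!)/d ≤ log d - 1 + 1/√d`. Summing, and using the same
bound once more for `∑_{d<n} log d = log (n-1)!`, gives
`(2/n²) log G(n) ≤ log n - 2 + 5/√n`.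
-/

open Filter Finset Real
open scoped Nat Topology

lemma log_factorial_le_stirling {n : ℕ} (hn : n ≠ 0) :
    log n ! ≤ n * log n - n + log n / 2 + 1 := by
  obtain ⟨k, rfl⟩ := Nat.exists_eq_succ_of_ne_zero hn
  have hmono : log (Stirling.stirlingSeq (k + 1)) ≤ log (Stirling.stirlingSeq 1) :=
    Stirling.log_stirlingSeq'_antitone (Nat.zero_le k)
  have hk : (0 : ℝ) < (k + 1 : ℕ) := by positivity
  rw [Stirling.log_stirlingSeq_formula, Stirling.stirlingSeq_one,
    log_div (exp_pos 1).ne' (by positivity), log_exp, log_sqrt zero_le_two,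
    log_mul two_ne_zero hk.ne', log_div hk.ne' (exp_pos 1).ne', log_exp] at hmono
  linarith

lemma one_add_half_log_le_sqrt {x : ℝ} (hx : 0 < x) : 1 + log x / 2 ≤ √x := by
  have h := log_le_sub_one_of_pos (sqrt_pos.2 hx)
  rw [log_sqrt hx.le] at h
  linarith

lemma log_factorial_le (n : ℕ) : log n ! ≤ n * log n - n + √n := by
  rcases eq_or_ne n 0 with rfl | hn
  · simp
  have := one_add_half_log_le_sqrt (x := n) (by positivity)
  linarith [log_factorial_le_stirling hn]

lemma sum_Icc_log_eq_log_factorial (m : ℕ) : ∑ d ∈ Icc 1 m, log d = log m ! := by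
  induction m with
  | zero => simp
  | succ m ih =>
    rw [sum_Icc_succ_top (by omega), ih, Nat.factorial_succ, Nat.cast_mul,
      log_mul (by positivity) (by positivity), add_comm]

lemma sum_Icc_inv_sqrt_le (m : ℕ) : ∑ d ∈ Icc 1 m, (√d)⁻¹ ≤ 2 * √m := by
  induction m with
  | zero => simp
  | succ m ih =>
    rw [sum_Icc_succ_top (by omega)]
    have hm : √(m : ℝ) ≤ √(m + 1 : ℕ) := sqrt_le_sqrt (by simp)
    have hpos : 0 < √(m + 1 : ℕ) := by positivity
    have hsq : √(m + 1 : ℕ) ^ 2 = √(m : ℝ) ^ 2 + 1 := by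
      rw [sq_sqrt (by positivity), sq_sqrt (by positivity)]; push_cast; ring
    have hstep : (√(m + 1 : ℕ))⁻¹ ≤ 2 * √(m + 1 : ℕ) - 2 * √m := by
      rw [inv_le_iff_one_le_mul₀' hpos]
      nlinarith
    linarith

lemma sum_Icc_log_factorial_div_le (m : ℕ) :
    ∑ d ∈ Icc 1 m, log d ! / d ≤ m * log m - 2 * m + 3 * √m := by
  have hterm : ∀ d ∈ Icc 1 m, log d ! / d ≤ log d - 1 + (√d)⁻¹ := by
    intro d hd
    have hd : (0 : ℝ) < d := Nat.cast_pos.2 (mem_Icc.1 hd).1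
    rw [div_le_iff₀ hd]
    have : (√d)⁻¹ * d = √d := by
      rw [inv_mul_eq_div, div_eq_iff (by positivity), mul_self_sqrt hd.le]
    nlinarith [log_factorial_le d]
  calc ∑ d ∈ Icc 1 m, log d ! / d
      ≤ ∑ d ∈ Icc 1 m, (log d - 1 + (√d)⁻¹) := sum_le_sum hterm
    _ = log m ! - m + ∑ d ∈ Icc 1 m, (√d)⁻¹ := by
      rw [sum_add_distrib, sum_sub_distrib, sum_Icc_log_eq_log_factorial]; simp
    _ ≤ m * log m - 2 * m + 3 * √m := by
      linarith [log_factorial_le m, sum_Icc_inv_sqrt_le m]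

lemma log_prod_factorial_rpow (x : ℝ) (m : ℕ) :
    log (∏ d ∈ Icc 1 m, (d ! : ℝ) ^ (x / (2 * d))) = x / 2 * ∑ d ∈ Icc 1 m, log d ! / d := by
  rw [log_prod fun d _ => by positivity, mul_sum]
  refine sum_congr rfl fun d _ => ?_
  rw [log_rpow (by positivity)]
  ring

lemma two_div_sq_mul_log_prod_factorial_rpow_sub_le {n : ℕ} (hn : n ≠ 0) :
    2 / (n : ℝ) ^ 2 * log (∏ d ∈ Icc 1 (n - 1), (d ! : ℝ) ^ ((n : ℝ) / (2 * d)))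
      - (log n - 2) ≤ 5 / √n := by
  obtain ⟨m, rfl⟩ := Nat.exists_eq_succ_of_ne_zero hn
  rw [Nat.succ_sub_one, log_prod_factorial_rpow]
  set S := ∑ d ∈ Icc 1 m, log d ! / d
  set N : ℝ := ((m + 1 : ℕ) : ℝ)
  have hN : 1 ≤ N := by simp [N]
  have hL : 0 ≤ log N := log_nonneg hN
  have hx : 1 ≤ √N := one_le_sqrt.2 hN
  have hNx : N = √N ^ 2 := (sq_sqrt (by positivity)).symm
  have hm : (m : ℝ) = N - 1 := by simp [N]
  have hmlog : m * log m ≤ m * log N := by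
    rcases eq_or_ne m 0 with rfl | hm0
    · simp
    · gcongr; simp [N]
  have hS : S ≤ m * log N - 2 * m + 3 * √N := by
    have : √(m : ℝ) ≤ √N := sqrt_le_sqrt (by simp [N])
    linarith [sum_Icc_log_factorial_div_le m]
  calc 2 / N ^ 2 * (N / 2 * S) - (log N - 2) = S / N - log N + 2 := by
        field_simp; ring
    _ ≤ (m * log N - 2 * m + 3 * √N) / N - log N + 2 := by gcongr
    _ = (2 + 3 * √N - log N) / N := by rw [hm]; field_simp; ring
    _ ≤ (2 + 3 * √N) / √N ^ 2 := by rw [← hNx]; gcongr; linarith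
    _ ≤ 5 / √N := by
        rw [div_le_div_iff₀ (by positivity) (by positivity)]; nlinarith

lemma Real.limsup_nonpos_of_eventuallyLE_of_tendsto_zero {α : Type*} {l : Filter α}
    {u v : α → ℝ} (h : u ≤ᶠ[l] v) (hv : Tendsto v l (𝓝 0)) : limsup u l ≤ 0 := by
  rw [limsup_eq]
  by_cases hb : BddBelow {a | ∀ᶠ n in l, u n ≤ a}
  · refine le_of_forall_pos_le_add fun ε hε => csInf_le hb ?_
    filter_upwards [h, hv (ge_mem_nhds (by simpa using hε))] with n hun hvn
    simpa using hun.trans hvn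
  · -- junk value: a `limsup` that would be `-∞` is `0` in `ℝ`
    exact (sInf_of_not_bddBelow hb).le

/-- With `G(n) = ∏_{d=1}^{n-1} (d!)^{n/(2d)}`, we have
`limsup_{n→∞} [(2/n²)·log G(n) − (log n − 2)] ≤ 0`, i.e.
`G(n) ≤ ((1+o(1))·n/e²)^{n²/2}`. -/
theorem stmt17 :
    Filter.limsup (fun n : ℕ =>
      (2 / (n : ℝ) ^ 2) *
          Real.log (∏ d ∈ Finset.Icc 1 (n - 1),
            ((Nat.factorial d : ℝ)) ^ ((n : ℝ) / (2 * d)))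
        - (Real.log n - 2)) Filter.atTop ≤ 0 := by
  have hv : Tendsto (fun n : ℕ => 5 / √(n : ℝ)) atTop (𝓝 0) :=
    tendsto_const_nhds.div_atTop (tendsto_sqrt_atTop.comp tendsto_natCast_atTop_atTop)
  refine Real.limsup_nonpos_of_eventuallyLE_of_tendsto_zero ?_ hv
  filter_upwards [eventually_ne_atTop 0] with n hn
  exact two_div_sq_mul_log_prod_factorial_rpow_sub_le hn
end
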